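/- arXiv:1511.06576 — 6 statements merged into one kernel-verified Lean document; each statement's English description precedes it below -/
import Mathlib

section
/- Let V, b : ℝ → ℝ be smooth 1-periodic functions with ∫₀¹ b(x) dx = 0. Define u(x) = -∫₀ˣ b(y) dy + ∫₀¹ (∫₀ˣ b(y) dy) dx, m(x) = exp(V(x) - b(x)²/2) / ∫₀¹ exp(V(y) - b(y)²/2) dy, and H̄ = log(∫₀¹ exp(V(y) - b(y)²/2) dy). Then the triple (u, m, H̄) satisfies u_x²/2 + V(x) + b(x)·u_x = log m + H̄ and (m·(u_x + b))_x = 0 on ℝ, and ∫₀¹ m dx = 1. -/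
open MeasureTheory Real

theorem stmt_0 (V b : ℝ → ℝ) (hV : ContDiff ℝ (⊤ : ℕ∞) V) (hb : ContDiff ℝ (⊤ : ℕ∞) b)
    (hVp : Function.Periodic V 1) (hbp : Function.Periodic b 1)
    (hb0 : ∫ x in (0:ℝ)..1, b x = 0)
    (u m : ℝ → ℝ) (H : ℝ)
    (hu : ∀ x, u x = -(∫ y in (0:ℝ)..x, b y) + ∫ t in (0:ℝ)..1, ∫ y in (0:ℝ)..t, b y)
    (hm : ∀ x, m x = Real.exp (V x - (b x)^2/2) / ∫ y in (0:ℝ)..1, Real.exp (V y - (b y)^2/2))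
    (hH : H = Real.log (∫ y in (0:ℝ)..1, Real.exp (V y - (b y)^2/2))) :
    (∀ x, (deriv u x)^2/2 + V x + b x * deriv u x = Real.log (m x) + H) ∧
    (∀ x, deriv (fun y => m y * (deriv u y + b y)) x = 0) ∧
    (∫ x in (0:ℝ)..1, m x = 1) := by
  set I : ℝ := ∫ y in (0:ℝ)..1, Real.exp (V y - (b y)^2/2) with hI
  have hbc : Continuous b := hb.continuous
  have hIpos : 0 < I := by
    rw [hI, intervalIntegral.integral_of_le zero_le_one]
    apply setIntegral_pos_iff_support_of_nonneg_ae _ _ |>.mpr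
    · simp only [Function.support, ne_eq]
      have : {y | Real.exp (V y - (b y)^2/2) ≠ 0} = Set.univ := by
        ext y; simp [Real.exp_ne_zero]
      rw [this]
      simp [Real.volume_Ioc]
    · filter_upwards with y using (Real.exp_pos _).le
    · exact ((hV.continuous.sub ((hbc.pow 2).div_const 2)).rexp).integrableOn_Ioc
  have hderiv : ∀ x, deriv u x = -b x := by
    intro x
    have h1 : HasDerivAt (fun t => ∫ y in (0:ℝ)..t, b y) (b x) x :=
      (intervalIntegral.integral_hasStrictDerivAt_right
        (hbc.intervalIntegrable _ _) (hbc.stronglyMeasurableAtFilter _ _)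
        hbc.continuousAt).hasDerivAt
    have h2 : HasDerivAt u (-b x) x := by
      have := (h1.neg.add_const (∫ t in (0:ℝ)..1, ∫ y in (0:ℝ)..t, b y))
      exact this.congr_of_eventuallyEq (by filter_upwards with t; rw [hu t]; rfl)
    exact h2.deriv
  refine ⟨?_, ?_, ?_⟩
  · intro x
    rw [hderiv x, hm x, hH, Real.log_div (Real.exp_ne_zero _) hIpos.ne',
      Real.log_exp]
    ring
  · intro x
    have : (fun y => m y * (deriv u y + b y)) = fun _ => 0 := by
      funext y; rw [hderiv y]; ring
    rw [this]; simp
  · have : ∀ x, m x = Real.exp (V x - (b x)^2/2) / I := hm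
    simp only [this]
    rw [intervalIntegral.integral_div, ← hI, div_self hIpos.ne']
end

section
/- Let u, v be C² 1-periodic functions with ∫₀¹ u = ∫₀¹ v = 0, let V, b be smooth 1-periodic, and let m = exp(u_x²/2 + V + b·u_x). If u is a critical point of J[w] = ∫₀¹ exp(w_x²/2 + V + b·w_x) dx in the sense that d/dε J[u + εv]|_{ε=0} = 0 for all such v, then (m(u_x + b))_x = 0 on [0,1]. Conversely, if (m(u_x + b))_x = 0 then d/dε J[u + εv]|_{ε=0} = 0 for all such v. -/
open MeasureTheory Real

set_option maxHeartbeats 1000000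

private lemma periodic_deriv' (u : ℝ → ℝ) (hu : Differentiable ℝ u)
    (hup : Function.Periodic u 1) : Function.Periodic (deriv u) 1 := by
  intro x
  have h1 : (fun y => u (y + 1)) = u := funext fun y => hup y
  have h2 : deriv (fun y => u (y + 1)) x = deriv u (x + 1) := by
    have := ((hu (x + 1)).hasDerivAt).comp x ((hasDerivAt_id x).add_const 1)
    simpa [Function.comp_def] using this.deriv
  rw [h1] at h2
  exact h2.symm

private lemma key_deriv (V b u m v : ℝ → ℝ)
    (hV : Continuous V) (hb : Continuous b)
    (hu1 : Differentiable ℝ u) (hu' : Continuous (deriv u))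
    (hv1 : Differentiable ℝ v) (hv' : Continuous (deriv v))
    (hm : ∀ x, m x = Real.exp ((deriv u x)^2/2 + V x + b x * deriv u x))
    (J : (ℝ → ℝ) → ℝ)
    (hJ : ∀ w, J w = ∫ x in (0:ℝ)..1,
      Real.exp ((deriv w x)^2/2 + V x + b x * deriv w x)) :
    HasDerivAt (fun ε => J (fun x => u x + ε * v x))
      (∫ x in (0:ℝ)..1, m x * (deriv u x + b x) * deriv v x) 0 := by
  set G : ℝ → ℝ → ℝ := fun ε x =>
    Real.exp ((deriv u x + ε * deriv v x)^2/2 + V x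
      + b x * (deriv u x + ε * deriv v x)) with hG
  set G' : ℝ → ℝ → ℝ := fun ε x =>
    G ε x * ((deriv u x + ε * deriv v x + b x) * deriv v x) with hG'
  have hGd : ∀ ε x, HasDerivAt (fun e => G e x) (G' ε x) ε := by
    intro ε x
    have h1 : HasDerivAt (fun e : ℝ => deriv u x + e * deriv v x) (deriv v x) ε := by
      simpa using ((hasDerivAt_id ε).mul_const (deriv v x)).const_add (deriv u x)
    have h2 := (((h1.pow 2).div_const 2).add_const (V x)).add (h1.const_mul (b x))
    have h3 := h2.exp
    convert h3 using 1
    · rfl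
    simp only [hG, hG', Pi.add_apply, Pi.pow_apply]
    norm_num
    ring
  have hGpc : Continuous (fun p : ℝ × ℝ => G p.1 p.2) := by
    apply Real.continuous_exp.comp
    have h1 : Continuous (fun p : ℝ × ℝ => deriv u p.2 + p.1 * deriv v p.2) :=
      (hu'.comp continuous_snd).add (continuous_fst.mul (hv'.comp continuous_snd))
    exact (((h1.pow 2).div_const 2).add (hV.comp continuous_snd)).add
      ((hb.comp continuous_snd).mul h1)
  have hG'pc : Continuous (fun p : ℝ × ℝ => G' p.1 p.2) := by
    have h1 : Continuous (fun p : ℝ × ℝ => deriv u p.2 + p.1 * deriv v p.2) :=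
      (hu'.comp continuous_snd).add (continuous_fst.mul (hv'.comp continuous_snd))
    exact hGpc.mul ((h1.add (hb.comp continuous_snd)).mul (hv'.comp continuous_snd))
  have hGc : ∀ ε, Continuous (fun x => G ε x) := by
    intro ε
    have := hGpc.comp (Continuous.prodMk_right ε : Continuous fun x : ℝ => (ε, x))
    exact this
  have hG'c : ∀ ε, Continuous (fun x => G' ε x) := by
    intro ε
    have := hG'pc.comp (Continuous.prodMk_right ε : Continuous fun x : ℝ => (ε, x))
    exact this
  obtain ⟨C, hC⟩ := (IsCompact.exists_bound_of_continuousOn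
    ((isCompact_Icc.prod isCompact_Icc) :
      IsCompact ((Set.Icc (-1:ℝ) 1) ×ˢ (Set.Icc (0:ℝ) 1)))
    hG'pc.continuousOn)
  have main := (intervalIntegral.hasDerivAt_integral_of_dominated_loc_of_deriv_le
    (F := G) (F' := G') (x₀ := (0:ℝ)) (a := (0:ℝ)) (b := (1:ℝ))
    (bound := fun _ => C) (μ := volume) (Metric.ball_mem_nhds (0:ℝ) one_pos)
    (Filter.Eventually.of_forall fun ε => (hGc ε).aestronglyMeasurable)
    ((hGc 0).intervalIntegrable 0 1)
    ((hG'c 0).aestronglyMeasurable)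
    (Filter.Eventually.of_forall fun t ht x hx => by
      have ht' : t ∈ Set.Icc (0:ℝ) 1 := by
        rw [Set.uIoc_of_le (by norm_num : (0:ℝ) ≤ 1)] at ht
        exact Set.Ioc_subset_Icc_self ht
      have hx' : x ∈ Set.Icc (-1:ℝ) 1 := by
        have := Metric.mem_ball.mp hx
        rw [Real.dist_eq, sub_zero] at this
        exact ⟨by linarith [abs_lt.mp this |>.1], le_of_lt (abs_lt.mp this).2⟩
      exact hC (x, t) (Set.mk_mem_prod hx' ht'))
    (intervalIntegrable_const)
    (Filter.Eventually.of_forall fun t ht x hx => hGd x t)).2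
  have heq : (fun ε => J (fun x => u x + ε * v x))
      = fun ε => ∫ t in (0:ℝ)..1, G ε t := by
    funext ε
    rw [hJ]
    apply intervalIntegral.integral_congr
    intro x _
    have hd : deriv (fun x => u x + ε * v x) x = deriv u x + ε * deriv v x :=
      ((hu1 x).hasDerivAt.add ((hv1 x).hasDerivAt.const_mul ε)).deriv
    simp only [hd, hG]
  have hval : (∫ x in (0:ℝ)..1, m x * (deriv u x + b x) * deriv v x)
      = ∫ t in (0:ℝ)..1, G' 0 t := by
    apply intervalIntegral.integral_congr
    intro x _
    simp only [hG', hG, hm x, zero_mul, add_zero]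
    ring
  rw [heq, hval]
  exact main

theorem stmt_4 (V b u m : ℝ → ℝ)
    (hV : ContDiff ℝ (⊤ : ℕ∞) V) (hb : ContDiff ℝ (⊤ : ℕ∞) b)
    (hVp : Function.Periodic V 1) (hbp : Function.Periodic b 1)
    (hu : ContDiff ℝ 2 u) (hup : Function.Periodic u 1)
    (hu0 : ∫ x in (0:ℝ)..1, u x = 0)
    (hm : ∀ x, m x = Real.exp ((deriv u x)^2/2 + V x + b x * deriv u x))
    (J : (ℝ → ℝ) → ℝ)
    (hJ : ∀ w, J w = ∫ x in (0:ℝ)..1,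
      Real.exp ((deriv w x)^2/2 + V x + b x * deriv w x)) :
    (∀ v : ℝ → ℝ, ContDiff ℝ 2 v → Function.Periodic v 1 →
        (∫ x in (0:ℝ)..1, v x) = 0 →
        deriv (fun ε => J (fun x => u x + ε * v x)) 0 = 0) ↔
      (∀ x ∈ Set.Icc (0:ℝ) 1, deriv (fun y => m y * (deriv u y + b y)) x = 0) := by
  -- regularity facts
  have h21 : (2 : WithTop ℕ∞) = 1 + 1 := by norm_num
  have hud : Differentiable ℝ u := hu.differentiable (by norm_num)
  have hu'1 : ContDiff ℝ 1 (deriv u) := by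
    rw [h21, contDiff_succ_iff_deriv] at hu; exact hu.2.2
  have hu'c : Continuous (deriv u) := hu'1.continuous
  have hV1 : ContDiff ℝ 1 V := hV.of_le (by simp)
  have hb1 : ContDiff ℝ 1 b := hb.of_le (by simp)
  have hVc : Continuous V := hV1.continuous
  have hbc : Continuous b := hb1.continuous
  have hmC : ContDiff ℝ 1 m := by
    have hme : m = fun x => Real.exp ((deriv u x)^2/2 + V x + b x * deriv u x) :=
      funext hm
    rw [hme]
    exact Real.contDiff_exp.comp
      ((((hu'1.pow 2).div_const 2).add hV1).add (hb1.mul hu'1))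
  set g : ℝ → ℝ := fun y => m y * (deriv u y + b y) with hgdef
  have hgC : ContDiff ℝ 1 g := hmC.mul (hu'1.add hb1)
  have hgc : Continuous g := hgC.continuous
  have hgd : Differentiable ℝ g := hgC.differentiable one_ne_zero
  have hu'p : Function.Periodic (deriv u) 1 := periodic_deriv' u hud hup
  have hmp : Function.Periodic m 1 := by
    intro x; rw [hm, hm, hu'p x, hVp x, hbp x]
  have hgp : Function.Periodic g 1 := by
    intro x; simp only [hgdef]; rw [hmp x, hu'p x, hbp x]
  -- the key derivative formula
  have key : ∀ v : ℝ → ℝ, ContDiff ℝ 2 v →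
      HasDerivAt (fun ε => J (fun x => u x + ε * v x))
        (∫ x in (0:ℝ)..1, g x * deriv v x) 0 := by
    intro v hv
    have hvd : Differentiable ℝ v := hv.differentiable (by norm_num)
    have hv'1 : ContDiff ℝ 1 (deriv v) := by
      rw [h21, contDiff_succ_iff_deriv] at hv; exact hv.2.2
    exact key_deriv V b u m v hVc hbc hud hu'c hvd hv'1.continuous hm J hJ
  constructor
  · -- criticality → transport equation
    intro hcrit x hx
    set c : ℝ := ∫ t in (0:ℝ)..1, g t with hcdef
    set w : ℝ → ℝ := fun x => ∫ t in (0:ℝ)..x, (g t - c) with hwdef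
    have hgcc : Continuous (fun t => g t - c) := hgc.sub continuous_const
    have hwderiv : ∀ x, HasDerivAt w (g x - c) x := fun x =>
      (hgcc.integral_hasStrictDerivAt 0 x).hasDerivAt
    have hwd : Differentiable ℝ w := fun x => (hwderiv x).differentiableAt
    have hwderiv' : deriv w = fun x => g x - c := funext fun x => (hwderiv x).deriv
    have hwC : ContDiff ℝ 2 w := by
      rw [h21, contDiff_succ_iff_deriv]
      refine ⟨hwd, by simp, ?_⟩
      rw [hwderiv']
      exact hgC.sub contDiff_const
    have hwp : Function.Periodic w 1 := by
      intro x
      have h1 : (∫ t in (0:ℝ)..(x+1), (g t - c)) - (∫ t in (0:ℝ)..x, (g t - c))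
          = ∫ t in x..(x+1), (g t - c) := by
        rw [intervalIntegral.integral_interval_sub_left
          (hgcc.intervalIntegrable 0 (x+1)) (hgcc.intervalIntegrable 0 x)]
      have h2 : (∫ t in x..(x+1), (g t - c)) = ∫ t in (0:ℝ)..1, (g t - c) := by
        have hper : Function.Periodic (fun t => g t - c) 1 := fun t => by
          simp [hgp t]
        have := hper.intervalIntegral_add_eq x 0
        simpa using this
      have h3 : (∫ t in (0:ℝ)..1, (g t - c)) = 0 := by
        rw [intervalIntegral.integral_sub (hgc.intervalIntegrable 0 1)
          (intervalIntegrable_const)]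
        simp [hcdef]
      simp only [hwdef]
      have := h1
      rw [h2, h3] at this
      linarith
    set K : ℝ := ∫ t in (0:ℝ)..1, w t with hKdef
    set v : ℝ → ℝ := fun x => w x - K with hvdef
    have hvC : ContDiff ℝ 2 v := hwC.sub contDiff_const
    have hvp : Function.Periodic v 1 := fun x => by simp only [hvdef, hwp x]
    have hv0 : (∫ x in (0:ℝ)..1, v x) = 0 := by
      simp only [hvdef]
      rw [intervalIntegral.integral_sub
        ((hwd.continuous).intervalIntegrable 0 1) intervalIntegrable_const]
      simp [hKdef]
    have hvderiv : deriv v = fun x => g x - c :=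
      funext fun x => ((hwderiv x).sub_const K).deriv
    have hzero : (∫ x in (0:ℝ)..1, g x * (g x - c)) = 0 := by
      have h := (key v hvC).deriv
      rw [hcrit v hvC hvp hv0] at h
      have h' : (∫ x in (0:ℝ)..1, g x * deriv v x)
          = ∫ x in (0:ℝ)..1, g x * (g x - c) := by
        apply intervalIntegral.integral_congr
        intro t _
        show g t * deriv v t = g t * (g t - c)
        rw [hvderiv]
      rw [h'] at h
      exact h.symm
    have hsq : (∫ x in (0:ℝ)..1, (g x - c)^2) = 0 := by
      have hcongr : (∫ x in (0:ℝ)..1, (g x - c)^2)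
          = ∫ x in (0:ℝ)..1, (g x * (g x - c) - c * (g x - c)) := by
        apply intervalIntegral.integral_congr
        intro t _; ring
      rw [hcongr, intervalIntegral.integral_sub
        (f := fun x => g x * (g x - c)) (g := fun x => c * (g x - c))
        ((hgc.mul hgcc).intervalIntegrable 0 1)
        ((continuous_const.mul hgcc).intervalIntegrable 0 1),
        hzero, intervalIntegral.integral_const_mul,
        intervalIntegral.integral_sub (hgc.intervalIntegrable 0 1)
          intervalIntegrable_const]
      simp [hcdef]
    have hgeq : ∀ y ∈ Set.Icc (0:ℝ) 1, g y = c := by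
      by_contra hcon
      push_neg at hcon
      obtain ⟨y, hy, hne⟩ := hcon
      have hpos : (0:ℝ) < ∫ x in (0:ℝ)..1, (g x - c)^2 := by
        apply intervalIntegral.integral_pos one_pos
        · exact ((hgcc.pow 2).continuousOn)
        · intro t _; positivity
        · refine ⟨y, hy, ?_⟩
          have h0 : g y - c ≠ 0 := sub_ne_zero.mpr hne
          exact lt_of_le_of_ne (sq_nonneg _) (Ne.symm (pow_ne_zero 2 h0))
      linarith [hsq ▸ hpos]
    have hgall : ∀ y : ℝ, g y = c := by
      intro y
      have hfr : y - (⌊y⌋ : ℝ) * 1 ∈ Set.Icc (0:ℝ) 1 := by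
        rw [mul_one]
        constructor
        · linarith [Int.floor_le y]
        · linarith [Int.lt_floor_add_one y]
      have := hgp.sub_int_mul_eq (x := y) ⌊y⌋
      rw [← this]
      exact hgeq _ hfr
    have : g = fun _ : ℝ => c := funext hgall
    show deriv g x = 0
    rw [this]
    simp
  · -- transport equation → criticality
    intro hflat v hvC hvp hv0
    have hvd : Differentiable ℝ v := hvC.differentiable (by norm_num)
    have hv'1 : ContDiff ℝ 1 (deriv v) := by
      rw [h21, contDiff_succ_iff_deriv] at hvC; exact hvC.2.2
    have hv'c : Continuous (deriv v) := hv'1.continuous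
    -- g is constant on [0,1]
    have hgconst : ∀ y ∈ Set.Icc (0:ℝ) 1, g y = g 0 := by
      intro y hy
      have hFTC : (∫ t in (0:ℝ)..y, (0:ℝ)) = g y - g 0 := by
        apply intervalIntegral.integral_eq_sub_of_hasDerivAt
        · intro t ht
          rw [Set.uIcc_of_le hy.1] at ht
          have ht' : t ∈ Set.Icc (0:ℝ) 1 := ⟨ht.1, le_trans ht.2 hy.2⟩
          have := (hgd t).hasDerivAt
          rwa [hflat t ht'] at this
        · exact intervalIntegrable_const
      simp at hFTC
      linarith
    have hdJ := (key v hvC).deriv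
    rw [hdJ]
    have h1 : (∫ x in (0:ℝ)..1, g x * deriv v x)
        = ∫ x in (0:ℝ)..1, g 0 * deriv v x := by
      apply intervalIntegral.integral_congr
      intro t ht
      rw [Set.uIcc_of_le (by norm_num : (0:ℝ) ≤ 1)] at ht
      show g t * deriv v t = g 0 * deriv v t
      rw [hgconst t ht]
    have h2 : (∫ x in (0:ℝ)..1, deriv v x) = v 1 - v 0 := by
      apply intervalIntegral.integral_eq_sub_of_hasDerivAt
      · intro t _; exact (hvd t).hasDerivAt
      · exact hv'c.intervalIntegrable 0 1
    have h3 : v 1 = v 0 := by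
      have := hvp 0; simpa using this
    rw [h1, intervalIntegral.integral_const_mul, h2, h3]
    ring
end

section
/- Let u, m, v, θ be smooth 1-periodic functions with m > 0 and θ > 0, and let V, b be smooth 1-periodic. Define A(m,u) = (-u_x²/2 - V - b·u_x + log m, -(m(u_x + b))_x). Then the L² pairing ⟨A(m,u) - A(θ,v), (m,u) - (θ,v)⟩ equals ∫₀¹ (log m - log θ)(m - θ) dx + ∫₀¹ ((m+θ)/2)(u_x - v_x)² dx, and in particular is nonnegative. -/
open MeasureTheory Real

lemma periodic_deriv'_s5 {f : ℝ → ℝ} (hf : Function.Periodic f 1) :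
    Function.Periodic (deriv f) 1 := by
  intro x
  have h : (fun y => f (y + 1)) = f := funext hf
  calc deriv f (x + 1) = deriv (fun y => f (y + 1)) x := (deriv_comp_add_const f 1 x).symm
    _ = deriv f x := by rw [h]

theorem stmt_5 (V b u m v θ : ℝ → ℝ)
    (hV : ContDiff ℝ (⊤ : ℕ∞) V) (hb : ContDiff ℝ (⊤ : ℕ∞) b)
    (hVp : Function.Periodic V 1) (hbp : Function.Periodic b 1)
    (hu : ContDiff ℝ (⊤ : ℕ∞) u) (hv : ContDiff ℝ (⊤ : ℕ∞) v)
    (hm : ContDiff ℝ (⊤ : ℕ∞) m) (hθ : ContDiff ℝ (⊤ : ℕ∞) θ)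
    (hup : Function.Periodic u 1) (hvp : Function.Periodic v 1)
    (hmp : Function.Periodic m 1) (hθp : Function.Periodic θ 1)
    (hmpos : ∀ x, 0 < m x) (hθpos : ∀ x, 0 < θ x) :
    (∫ x in (0:ℝ)..1,
        (((-(deriv u x)^2/2 - V x - b x * deriv u x + Real.log (m x)) -
          (-(deriv v x)^2/2 - V x - b x * deriv v x + Real.log (θ x))) * (m x - θ x) +
        ((-(deriv (fun y => m y * (deriv u y + b y)) x)) -
          (-(deriv (fun y => θ y * (deriv v y + b y)) x))) * (u x - v x))) =
      (∫ x in (0:ℝ)..1, (Real.log (m x) - Real.log (θ x)) * (m x - θ x)) +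
        (∫ x in (0:ℝ)..1, ((m x + θ x)/2) * (deriv u x - deriv v x)^2) ∧
    0 ≤ ∫ x in (0:ℝ)..1,
        (((-(deriv u x)^2/2 - V x - b x * deriv u x + Real.log (m x)) -
          (-(deriv v x)^2/2 - V x - b x * deriv v x + Real.log (θ x))) * (m x - θ x) +
        ((-(deriv (fun y => m y * (deriv u y + b y)) x)) -
          (-(deriv (fun y => θ y * (deriv v y + b y)) x))) * (u x - v x)) := by
  have hu' : ContDiff ℝ ((⊤:ℕ∞) : WithTop ℕ∞) (deriv u) := (contDiff_infty_iff_deriv.mp (hu.of_le (by simp))).2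
  have hv' : ContDiff ℝ ((⊤:ℕ∞) : WithTop ℕ∞) (deriv v) := (contDiff_infty_iff_deriv.mp (hv.of_le (by simp))).2
  set P : ℝ → ℝ := fun y => m y * (deriv u y + b y) with hPdef
  set Q : ℝ → ℝ := fun y => θ y * (deriv v y + b y) with hQdef
  have hP : ContDiff ℝ ((⊤:ℕ∞) : WithTop ℕ∞) P := (hm.of_le (by simp)).mul (hu'.add (hb.of_le (by simp)))
  have hQ : ContDiff ℝ ((⊤:ℕ∞) : WithTop ℕ∞) Q := (hθ.of_le (by simp)).mul (hv'.add (hb.of_le (by simp)))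
  have hdP : Continuous (deriv P) := (contDiff_infty_iff_deriv.mp hP).2.continuous
  have hdQ : Continuous (deriv Q) := (contDiff_infty_iff_deriv.mp hQ).2.continuous
  -- derivative of the boundary-term function G
  set G : ℝ → ℝ := fun y => (P y - Q y) * (u y - v y) with hGdef
  have hGd : ∀ x, HasDerivAt G
      ((deriv P x - deriv Q x) * (u x - v x) + (P x - Q x) * (deriv u x - deriv v x)) x := by
    intro x
    exact ((hP.differentiable (by simp) x).hasDerivAt.sub
        (hQ.differentiable (by simp) x).hasDerivAt).mul
      ((hu.differentiable (by simp) x).hasDerivAt.sub (hv.differentiable (by simp) x).hasDerivAt)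
  -- periodicity of G
  have hGper : Function.Periodic G 1 := by
    intro x
    simp only [hGdef, hPdef, hQdef, hmp x, hθp x, hbp x, hup x, hvp x,
      periodic_deriv'_s5 hup x, periodic_deriv'_s5 hvp x]
  -- continuity facts
  have hcu : Continuous (deriv u) := hu'.continuous
  have hcv : Continuous (deriv v) := hv'.continuous
  have hclm : Continuous fun x => Real.log (m x) :=
    hm.continuous.log (fun x => (hmpos x).ne')
  have hclθ : Continuous fun x => Real.log (θ x) :=
    hθ.continuous.log (fun x => (hθpos x).ne')
  have hg : Continuous fun x => (Real.log (m x) - Real.log (θ x)) * (m x - θ x) :=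
    (hclm.sub hclθ).mul (hm.continuous.sub hθ.continuous)
  have hh : Continuous fun x => ((m x + θ x)/2) * (deriv u x - deriv v x)^2 :=
    (((hm.continuous.add hθ.continuous).div_const 2)).mul ((hcu.sub hcv).pow 2)
  have hGdc : Continuous fun x =>
      (deriv P x - deriv Q x) * (u x - v x) + (P x - Q x) * (deriv u x - deriv v x) :=
    ((hdP.sub hdQ).mul (hu.continuous.sub hv.continuous)).add
      ((hP.continuous.sub hQ.continuous).mul (hcu.sub hcv))
  -- pointwise identity
  have hpt : ∀ x,
      (((-(deriv u x)^2/2 - V x - b x * deriv u x + Real.log (m x)) -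
          (-(deriv v x)^2/2 - V x - b x * deriv v x + Real.log (θ x))) * (m x - θ x) +
        ((-(deriv P x)) - (-(deriv Q x))) * (u x - v x)) =
      ((Real.log (m x) - Real.log (θ x)) * (m x - θ x) +
        ((m x + θ x)/2) * (deriv u x - deriv v x)^2) -
      ((deriv P x - deriv Q x) * (u x - v x) + (P x - Q x) * (deriv u x - deriv v x)) := by
    intro x
    simp only [hPdef, hQdef]
    ring
  -- the boundary integral vanishes
  have hGint : (∫ x in (0:ℝ)..1,
      ((deriv P x - deriv Q x) * (u x - v x) + (P x - Q x) * (deriv u x - deriv v x))) = 0 := by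
    rw [intervalIntegral.integral_eq_sub_of_hasDerivAt (fun x _ => hGd x)
      (hGdc.intervalIntegrable 0 1)]
    have := hGper 0
    rw [zero_add] at this
    rw [this, sub_self]
  have key : (∫ x in (0:ℝ)..1,
        (((-(deriv u x)^2/2 - V x - b x * deriv u x + Real.log (m x)) -
          (-(deriv v x)^2/2 - V x - b x * deriv v x + Real.log (θ x))) * (m x - θ x) +
        ((-(deriv P x)) - (-(deriv Q x))) * (u x - v x))) =
      (∫ x in (0:ℝ)..1, (Real.log (m x) - Real.log (θ x)) * (m x - θ x)) +
        (∫ x in (0:ℝ)..1, ((m x + θ x)/2) * (deriv u x - deriv v x)^2) := by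
    rw [intervalIntegral.integral_congr (fun x _ => hpt x)]
    rw [intervalIntegral.integral_sub (by exact (hg.add hh).intervalIntegrable 0 1 : IntervalIntegrable (fun x => (Real.log (m x) - Real.log (θ x)) * (m x - θ x) + ((m x + θ x)/2) * (deriv u x - deriv v x)^2) volume 0 1)
      (hGdc.intervalIntegrable 0 1),
      intervalIntegral.integral_add (hg.intervalIntegrable 0 1) (hh.intervalIntegrable 0 1),
      hGint, sub_zero]
  refine ⟨key, ?_⟩
  rw [key]
  have h1 : 0 ≤ ∫ x in (0:ℝ)..1, (Real.log (m x) - Real.log (θ x)) * (m x - θ x) := by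
    apply intervalIntegral.integral_nonneg (by norm_num)
    intro x _
    rcases le_total (θ x) (m x) with h | h
    · exact mul_nonneg (sub_nonneg.2 (Real.log_le_log (hθpos x) h)) (sub_nonneg.2 h)
    · have h1 : Real.log (m x) - Real.log (θ x) ≤ 0 :=
        sub_nonpos.2 (Real.log_le_log (hmpos x) h)
      have h2 : m x - θ x ≤ 0 := sub_nonpos.2 h
      nlinarith
  have h2 : 0 ≤ ∫ x in (0:ℝ)..1, ((m x + θ x)/2) * (deriv u x - deriv v x)^2 := by
    apply intervalIntegral.integral_nonneg (by norm_num)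
    intro x _
    have h1 := (hmpos x).le
    have h2 := (hθpos x).le
    positivity
  linarith
end

section
/- Let u be a smooth 1-periodic function, V, b smooth 1-periodic, m = exp(u_x²/2 + V + b·u_x), and v = -(m(u_x + b))_x. Then for every smooth 1-periodic w with ∫₀¹ w = 0 and ∫₀¹ u = 0, J[w] ≥ J[u] + ∫₀¹ v·(w - u) dx, where J[u] = ∫₀¹ exp(u_x²/2 + V + b·u_x) dx. That is, v belongs to the subdifferential of J at u. -/
open MeasureTheory Real

theorem stmt_7 (V b u m v : ℝ → ℝ)
    (hV : ContDiff ℝ (⊤ : ℕ∞) V) (hb : ContDiff ℝ (⊤ : ℕ∞) b)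
    (hVp : Function.Periodic V 1) (hbp : Function.Periodic b 1)
    (hu : ContDiff ℝ (⊤ : ℕ∞) u) (hup : Function.Periodic u 1)
    (hu0 : ∫ x in (0:ℝ)..1, u x = 0)
    (hm : ∀ x, m x = Real.exp ((deriv u x)^2/2 + V x + b x * deriv u x))
    (hv : ∀ x, v x = -(deriv (fun y => m y * (deriv u y + b y)) x))
    (J : (ℝ → ℝ) → ℝ)
    (hJ : ∀ w, J w = ∫ x in (0:ℝ)..1,
      Real.exp ((deriv w x)^2/2 + V x + b x * deriv w x)) :
    ∀ w : ℝ → ℝ, ContDiff ℝ (⊤ : ℕ∞) w → Function.Periodic w 1 →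
      (∫ x in (0:ℝ)..1, w x) = 0 →
      J u + ∫ x in (0:ℝ)..1, v x * (w x - u x) ≤ J w := by
  intro w hw hwp hw0
  have hu' : ContDiff ℝ (⊤:ℕ∞) u := hu.of_le (by simp)
  have hw' : ContDiff ℝ (⊤:ℕ∞) w := hw.of_le (by simp)
  have hV' : ContDiff ℝ (⊤:ℕ∞) V := hV.of_le (by simp)
  have hb' : ContDiff ℝ (⊤:ℕ∞) b := hb.of_le (by simp)
  have hdu : ContDiff ℝ (⊤:ℕ∞) (deriv u) := (contDiff_infty_iff_deriv.mp hu').2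
  have hdw : ContDiff ℝ (⊤:ℕ∞) (deriv w) := (contDiff_infty_iff_deriv.mp hw').2
  have hme : m = fun x => Real.exp ((deriv u x)^2/2 + V x + b x * deriv u x) :=
    funext hm
  have hms : ContDiff ℝ (⊤:ℕ∞) m := by
    rw [hme]
    exact Real.contDiff_exp.comp
      ((((hdu.pow 2).div_const 2).add hV').add (hb'.mul hdu))
  set g : ℝ → ℝ := fun y => m y * (deriv u y + b y) with hg
  have hgs : ContDiff ℝ (⊤:ℕ∞) g := hms.mul (hdu.add hb')
  have hdgc : Continuous (deriv g) := (contDiff_infty_iff_deriv.mp hgs).2.continuous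
  -- periodicity of deriv u
  have hdup : Function.Periodic (deriv u) 1 := by
    intro x
    have h1 : (fun y => u (y + 1)) = u := funext fun y => hup y
    calc deriv u (x + 1) = deriv (fun y => u (y + 1)) x :=
          (deriv_comp_add_const u 1 x).symm
      _ = deriv u x := by rw [h1]
  have hmp : Function.Periodic m 1 := by
    intro x; rw [hm, hm, hdup x, hVp x, hbp x]
  have hgp : Function.Periodic g 1 := by
    intro x
    show m (x + 1) * (deriv u (x + 1) + b (x + 1)) = m x * (deriv u x + b x)
    rw [hmp x, hdup x, hbp x]
  -- integrability
  have int_m : IntervalIntegrable m volume 0 1 :=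
    hms.continuous.intervalIntegrable 0 1
  have int_gd : IntervalIntegrable (fun x => g x * (deriv w x - deriv u x)) volume 0 1 :=
    (hgs.continuous.mul (hdw.continuous.sub hdu.continuous)).intervalIntegrable 0 1
  have int_dg : IntervalIntegrable (deriv g) volume 0 1 := hdgc.intervalIntegrable 0 1
  have int_dwu : IntervalIntegrable (fun x => deriv w x - deriv u x) volume 0 1 :=
    (hdw.continuous.sub hdu.continuous).intervalIntegrable 0 1
  -- integration by parts
  have hgD : ∀ x ∈ Set.uIcc (0:ℝ) 1, HasDerivAt g (deriv g x) x :=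
    fun x _ => (hgs.differentiable (by simp) x).hasDerivAt
  have hwuD : ∀ x ∈ Set.uIcc (0:ℝ) 1,
      HasDerivAt (fun y => w y - u y) (deriv w x - deriv u x) x :=
    fun x _ => ((hw'.differentiable (by simp) x).hasDerivAt).sub
      ((hu'.differentiable (by simp) x).hasDerivAt)
  have ibp := intervalIntegral.integral_mul_deriv_eq_deriv_mul hgD hwuD int_dg int_dwu
  have hg10 : g 1 = g 0 := by have := hgp 0; simpa using this
  have hw10 : w 1 = w 0 := by have := hwp 0; simpa using this
  have hu10 : u 1 = u 0 := by have := hup 0; simpa using this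
  have e1 : ∫ x in (0:ℝ)..1, v x * (w x - u x)
      = ∫ x in (0:ℝ)..1, g x * (deriv w x - deriv u x) := by
    have hvd : ∀ x, v x * (w x - u x) = -(deriv g x * (w x - u x)) := by
      intro x; rw [hv x]; ring
    rw [ibp, hg10, hw10, hu10]
    simp only [hvd]
    rw [intervalIntegral.integral_neg]
    ring
  -- pointwise inequality
  have key : ∀ x ∈ Set.Icc (0:ℝ) 1, m x + g x * (deriv w x - deriv u x)
      ≤ Real.exp ((deriv w x)^2/2 + V x + b x * deriv w x) := by
    intro x _
    set a := deriv u x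
    set c := deriv w x
    set t := a^2/2 + V x + b x * a with ht
    set s := c^2/2 + V x + b x * c with hs
    have h1 : (s - t) + 1 ≤ Real.exp (s - t) := Real.add_one_le_exp _
    have h3 : (0:ℝ) < Real.exp t := Real.exp_pos t
    have h2 : Real.exp t * Real.exp (s - t) = Real.exp s := by
      rw [← Real.exp_add]; ring_nf
    have h4 := mul_le_mul_of_nonneg_left h1 h3.le
    have h5 : Real.exp t + Real.exp t * (s - t) ≤ Real.exp s := by nlinarith [h4, h2]
    have h6 : (a + b x) * (c - a) ≤ s - t := by
      rw [ht, hs]; nlinarith [sq_nonneg (c - a)]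
    have h7 := mul_le_mul_of_nonneg_left h6 h3.le
    have hmx : m x = Real.exp t := hm x
    show m x + m x * (a + b x) * (c - a) ≤ Real.exp s
    rw [hmx]
    nlinarith [h5, h7]
  have int_sum : IntervalIntegrable (fun x => m x + g x * (deriv w x - deriv u x)) volume 0 1 :=
    int_m.add int_gd
  have int_exp : IntervalIntegrable
      (fun x => Real.exp ((deriv w x)^2/2 + V x + b x * deriv w x)) volume 0 1 :=
    (Real.continuous_exp.comp
      ((((hdw.pow 2).div_const 2).add hV').add (hb'.mul hdw)).continuous).intervalIntegrable 0 1
  have mono := intervalIntegral.integral_mono_on (by norm_num : (0:ℝ) ≤ 1)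
    int_sum int_exp key
  have hJu : J u = ∫ x in (0:ℝ)..1, m x := by
    rw [hJ u]; exact intervalIntegral.integral_congr fun x _ => (hm x).symm
  calc J u + ∫ x in (0:ℝ)..1, v x * (w x - u x)
      = ∫ x in (0:ℝ)..1, (m x + g x * (deriv w x - deriv u x)) := by
        rw [e1, hJu, ← intervalIntegral.integral_add int_m int_gd]
    _ ≤ ∫ x in (0:ℝ)..1, Real.exp ((deriv w x)^2/2 + V x + b x * deriv w x) := mono
    _ = J w := (hJ w).symm
end

section
/- Fix N, h = 1/N, differentiable convex F_i : ℝ² → ℝ, ψ_i as the periodic difference-quotient maps, and G_i(u) = F_i(ψ_i(u)). For u ∈ ℝ^N let L_u* denote the adjoint (transpose) of the Jacobian of G = (G_1,…,G_N) at u. Then for all u, v ∈ ℝ^N and all m ∈ ℝ^N with m_i > 0: Σ_{i=1}^N [ (G_i(v) - G_i(u))·m_i + (L_u* m)_i·(u_i - v_i) ] ≥ 0. -/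
/-!
Each `G i` is `F i` composed with a linear map, hence convex and differentiable. Pairing the
transposed Jacobian with `u - v` gives `∑ⱼ mⱼ DGⱼ(u)(u - v)`, so the sum equals
`∑ⱼ mⱼ (Gⱼ v - Gⱼ u - DGⱼ(u)(v - u))`, a nonnegative combination of gradient-inequality defects.
-/

open Finset

theorem ConvexOn.apply_sub_le_sub_of_hasFDerivAt {E : Type*} [NormedAddCommGroup E]
    [NormedSpace ℝ E] {f : E → ℝ} {f' : E →L[ℝ] ℝ} {x : E} (hf : ConvexOn ℝ Set.univ f)
    (hx : HasFDerivAt f f' x) (y : E) : f' (y - x) ≤ f y - f x := by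
  have hline : ConvexOn ℝ Set.univ (f ∘ (AffineMap.lineMap x y : ℝ → E)) := by
    simpa using hf.comp_affineMap (AffineMap.lineMap x y)
  have hderiv : HasDerivAt (f ∘ (AffineMap.lineMap x y : ℝ → E)) (f' (y - x)) 0 := by
    exact HasFDerivAt.comp_hasDerivAt _ (by simpa using hx) AffineMap.hasDerivAt_lineMap
  simpa [slope_def_field] using
    hline.le_slope_of_hasDerivAt (Set.mem_univ 0) (Set.mem_univ 1) one_pos hderiv

theorem sum_sum_apply_single_mul_mul {ι κ : Type*} [Fintype ι] [Fintype κ] [DecidableEq ι]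
    (L : κ → (ι → ℝ) →L[ℝ] ℝ) (m : κ → ℝ) (w : ι → ℝ) :
    ∑ i, (∑ j, L j (Pi.single i 1) * m j) * w i = ∑ j, m j * L j w := by
  have hL_apply : ∀ j, L j w = ∑ i, w i * L j (Pi.single i 1) := fun j => by
    conv_lhs => rw [pi_eq_sum_univ' w]
    simp [map_sum]
  simp_rw [hL_apply, sum_mul, mul_sum]
  rw [sum_comm]
  exact sum_congr rfl fun _ _ => sum_congr rfl fun _ _ => by ring

/-- The paper's `ψ_i` with `h = 1/N`; arithmetic in `Fin N` makes the indices periodic. -/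
noncomputable def periodicDiffQuot (N : ℕ) [NeZero N] (i : Fin N) : (Fin N → ℝ) →L[ℝ] ℝ × ℝ :=
  let δ : Fin N → (Fin N → ℝ) →L[ℝ] ℝ := fun j => .proj i - .proj j
  (N : ℝ) • (δ (i + 1)).prod (δ (i - 1))

theorem periodicDiffQuot_apply (N : ℕ) [NeZero N] (i : Fin N) (u : Fin N → ℝ) :
    periodicDiffQuot N i u = ((u i - u (i + 1)) * N, (u i - u (i - 1)) * N) := by
  simp [periodicDiffQuot, mul_comm]

theorem stmt_14 (N : ℕ) [NeZero N] (F : Fin N → ℝ × ℝ → ℝ)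
    (hF : ∀ i, ConvexOn ℝ Set.univ (F i))
    (hFd : ∀ i, Differentiable ℝ (F i))
    (G : Fin N → (Fin N → ℝ) → ℝ)
    (hG : ∀ i u, G i u = F i ((u i - u (i+1)) * N, (u i - u (i-1)) * N))
    (Lstar : (Fin N → ℝ) → (Fin N → ℝ) → Fin N → ℝ)
    (hL : ∀ u m i, Lstar u m i = ∑ j, fderiv ℝ (G j) u (Pi.single i 1) * m j)
    (u v m : Fin N → ℝ) (hm : ∀ i, 0 < m i) :
    0 ≤ ∑ i, ((G i v - G i u) * m i + Lstar u m i * (u i - v i)) := by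
  have hG_eq : ∀ j, G j = F j ∘ periodicDiffQuot N j := fun j =>
    funext fun w => by rw [hG, Function.comp_apply, periodicDiffQuot_apply]
  have hGc : ∀ j, ConvexOn ℝ Set.univ (G j) := fun j => by
    simpa [hG_eq] using (hF j).comp_linearMap (periodicDiffQuot N j).toLinearMap
  have hGd : ∀ j, Differentiable ℝ (G j) := fun j => by
    rw [hG_eq]; exact (hFd j).comp (periodicDiffQuot N j).differentiable
  have hsum : ∑ i, ((G i v - G i u) * m i + Lstar u m i * (u i - v i))
      = ∑ j, m j * (G j v - G j u - fderiv ℝ (G j) u (v - u)) := by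
    have hadj := sum_sum_apply_single_mul_mul (fun j => fderiv ℝ (G j) u) m (u - v)
    simp only [Pi.sub_apply] at hadj
    simp_rw [sum_add_distrib, hL]
    rw [hadj, ← sum_add_distrib]
    refine sum_congr rfl fun j _ => ?_
    rw [← neg_sub v u, map_neg]
    ring
  rw [hsum]
  exact sum_nonneg fun j _ => mul_nonneg (hm j).le <| sub_nonneg.mpr <|
    (hGc j).apply_sub_le_sub_of_hasFDerivAt (hGd j u).hasFDerivAt v
end

section
/- Fix N, h = 1/N, differentiable convex F_i : ℝ² → ℝ, G_i(u) = F_i(ψ_i(u)) with ψ_i the periodic difference-quotient maps, and define A^N(m,u) = (-G(u) + log m, L_u* m) on ℝ_+^N × ℝ^N, where log m = (log m_1,…,log m_N) and L_u* is the adjoint of the Jacobian of G at u. Then A^N is monotone: for all (m,u), (θ,v) with m_i, θ_i > 0, ⟨A^N(m,u) - A^N(θ,v), (m,u) - (θ,v)⟩_{ℝ^N × ℝ^N} ≥ 0. -/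
/-!
The pairing splits into three sums. The first, `∑ (log m_i - log θ_i) (m_i - θ_i)`, is nonnegative
because `log` is increasing. By duality the `L^*` terms equal `∑_j m_j DG_j(u)(u - v)` and
`∑_j θ_j DG_j(v)(u - v)`; together with the `G`-terms they form the first-order convexity gaps of
each `G_j = F_j ∘ ψ_j` at `u` and at `v`, weighted by `m_j > 0` and `θ_j > 0`.
-/

open Real Set

theorem ConvexOn.fderiv_apply_sub_le {E : Type*} [NormedAddCommGroup E] [NormedSpace ℝ E]
    {f : E → ℝ} (hf : ConvexOn ℝ univ f) {x : E} (hfx : DifferentiableAt ℝ f x) (y : E) :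
    fderiv ℝ f x (y - x) ≤ f y - f x := by
  have hline : ConvexOn ℝ univ (f ∘ AffineMap.lineMap (k := ℝ) x y) := hf.comp_affineMap _
  have hderiv : HasDerivAt (f ∘ AffineMap.lineMap (k := ℝ) x y) (fderiv ℝ f x (y - x)) 0 := by
    refine HasFDerivAt.comp_hasDerivAt (0 : ℝ) ?_ AffineMap.hasDerivAt_lineMap
    simpa using hfx.hasFDerivAt
  simpa [slope_def_field] using
    hline.le_slope_of_hasDerivAt (mem_univ 0) (mem_univ 1) one_pos hderiv

lemma Real.log_sub_log_mul_sub_nonneg {a b : ℝ} (ha : 0 < a) (hb : 0 < b) :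
    0 ≤ (log a - log b) * (a - b) := by
  rcases le_total b a with hba | hab
  · exact mul_nonneg (sub_nonneg.2 (log_le_log hb hba)) (sub_nonneg.2 hba)
  · exact mul_nonneg_of_nonpos_of_nonpos (sub_nonpos.2 (log_le_log ha hab)) (sub_nonpos.2 hab)

lemma ContinuousLinearMap.sum_apply_single_mul {ι : Type*} [Fintype ι] [DecidableEq ι]
    (ℓ : (ι → ℝ) →L[ℝ] ℝ) (p : ι → ℝ) : ∑ i, ℓ (Pi.single i 1) * p i = ℓ p := by
  conv_rhs => rw [← Finset.univ_sum_single p]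
  rw [map_sum]
  refine Finset.sum_congr rfl fun i _ => ?_
  rw [mul_comm, ← smul_eq_mul, ← map_smul, ← Pi.single_smul', smul_eq_mul, mul_one]

section AdjointJacobian

variable {ι : Type*} [Fintype ι] [DecidableEq ι]

/-- `L_u^* m` in the paper's notation. -/
noncomputable def adjointJacobian (G : ι → (ι → ℝ) → ℝ) (u m : ι → ℝ) (i : ι) : ℝ :=
  ∑ j, fderiv ℝ (G j) u (Pi.single i 1) * m j

lemma sum_adjointJacobian_mul (G : ι → (ι → ℝ) → ℝ) (u m p : ι → ℝ) :
    ∑ i, adjointJacobian G u m i * p i = ∑ j, m j * fderiv ℝ (G j) u p := by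
  simp only [adjointJacobian, Finset.sum_mul]
  rw [Finset.sum_comm]
  refine Finset.sum_congr rfl fun j _ => ?_
  simp_rw [mul_right_comm _ (m j), ← Finset.sum_mul, (fderiv ℝ (G j) u).sum_apply_single_mul,
    mul_comm]

theorem sum_log_sub_adjointJacobian_nonneg {G : ι → (ι → ℝ) → ℝ}
    (hG : ∀ j, ConvexOn ℝ univ (G j)) (hGd : ∀ j, Differentiable ℝ (G j)) {u v m θ : ι → ℝ}
    (hm : ∀ i, 0 < m i) (hθ : ∀ i, 0 < θ i) :
    0 ≤ ∑ i, (((-G i u + log (m i)) - (-G i v + log (θ i))) * (m i - θ i)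
          + (adjointJacobian G u m i - adjointJacobian G v θ i) * (u i - v i)) := by
  have hconv_u : ∀ j, 0 ≤ fderiv ℝ (G j) u (u - v) - (G j u - G j v) := fun j => by
    have := (hG j).fderiv_apply_sub_le (hGd j u) v
    rw [← neg_sub u v, map_neg] at this
    linarith
  have hconv_v : ∀ j, 0 ≤ (G j u - G j v) - fderiv ℝ (G j) v (u - v) := fun j =>
    sub_nonneg.2 ((hG j).fderiv_apply_sub_le (hGd j v) u)
  have hsplit : ∑ i, (((-G i u + log (m i)) - (-G i v + log (θ i))) * (m i - θ i)
        + (adjointJacobian G u m i - adjointJacobian G v θ i) * (u i - v i))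
      = ∑ i, ((log (m i) - log (θ i)) * (m i - θ i)
          + m i * (fderiv ℝ (G i) u (u - v) - (G i u - G i v))
          + θ i * ((G i u - G i v) - fderiv ℝ (G i) v (u - v)))
        + (∑ i, adjointJacobian G u m i * (u - v) i - ∑ i, m i * fderiv ℝ (G i) u (u - v))
        - (∑ i, adjointJacobian G v θ i * (u - v) i - ∑ i, θ i * fderiv ℝ (G i) v (u - v)) := by
    simp only [← Finset.sum_sub_distrib, ← Finset.sum_add_distrib, Pi.sub_apply]
    exact Finset.sum_congr rfl fun i _ => by ring
  rw [hsplit, sum_adjointJacobian_mul, sum_adjointJacobian_mul, sub_self, sub_self, add_zero,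
    sub_zero]
  exact Finset.sum_nonneg fun i _ => add_nonneg (add_nonneg
    (log_sub_log_mul_sub_nonneg (hm i) (hθ i)) (mul_nonneg (hm i).le (hconv_u i)))
    (mul_nonneg (hθ i).le (hconv_v i))

end AdjointJacobian

/-- The paper's `ψ_i`, with `h = 1 / N` and indices in `ℤ / N`. -/
noncomputable def periodicDiffQuotient (N : ℕ) [NeZero N] (i : Fin N) :
    (Fin N → ℝ) →L[ℝ] ℝ × ℝ :=
  let coord : Fin N → (Fin N → ℝ) →L[ℝ] ℝ := ContinuousLinearMap.proj
  ((N : ℝ) • (coord i - coord (i + 1))).prod ((N : ℝ) • (coord i - coord (i - 1)))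

lemma periodicDiffQuotient_apply (N : ℕ) [NeZero N] (i : Fin N) (u : Fin N → ℝ) :
    periodicDiffQuotient N i u = ((u i - u (i + 1)) * N, (u i - u (i - 1)) * N) := by
  simp [periodicDiffQuotient, mul_comm]

theorem stmt_15 (N : ℕ) [NeZero N] (F : Fin N → ℝ × ℝ → ℝ)
    (hF : ∀ i, ConvexOn ℝ Set.univ (F i))
    (hFd : ∀ i, Differentiable ℝ (F i))
    (G : Fin N → (Fin N → ℝ) → ℝ)
    (hG : ∀ i u, G i u = F i ((u i - u (i+1)) * N, (u i - u (i-1)) * N))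
    (Lstar : (Fin N → ℝ) → (Fin N → ℝ) → Fin N → ℝ)
    (hL : ∀ u m i, Lstar u m i = ∑ j, fderiv ℝ (G j) u (Pi.single i 1) * m j)
    (u v m θ : Fin N → ℝ) (hm : ∀ i, 0 < m i) (hθ : ∀ i, 0 < θ i) :
    0 ≤ ∑ i, (((-G i u + Real.log (m i)) - (-G i v + Real.log (θ i))) * (m i - θ i)
          + (Lstar u m i - Lstar v θ i) * (u i - v i)) := by
  have hGψ : ∀ i, G i = F i ∘ periodicDiffQuotient N i := fun i =>
    funext fun u => by rw [hG, Function.comp_apply, periodicDiffQuotient_apply]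
  obtain rfl : Lstar = adjointJacobian G := funext₃ hL
  refine sum_log_sub_adjointJacobian_nonneg (fun i => ?_) (fun i => ?_) hm hθ
  · simpa [hGψ i] using (hF i).comp_linearMap (periodicDiffQuotient N i).toLinearMap
  · simpa [hGψ i] using (hFd i).comp (periodicDiffQuotient N i).differentiable
end
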